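/- arXiv:2012.00369 — 3 statements merged into one kernel-verified Lean document; each statement's English description precedes it below -/
import Mathlib

section
/- If θ̂ : ℝ≥0 → ℝ satisfies the gradient estimator ODE θ̂'(t) = γ Δ(t)(𝒴(t) - Δ(t)θ̂(t)) where 𝒴(t) = Δ(t)θ for a constant θ, and w satisfies w'(t) = -γ Δ(t)² w(t) with w(0) = 1, then for all t ≥ 0, (1 - w(t))·θ = θ̂(t) - w(t)·θ̂(0). -/
/-! Both the estimation error `θh - θ` and `w` solve the scalar linear ODE `y' = -γ Δ² y`. With
the integrating factor `E t = exp (∫₀ᵗ γ Δ²)` each product `E • y` has zero derivative, so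
`y t = y 0 / E t = y 0 * w t`; for `y = θh - θ` this is the claimed relation. -/

open intervalIntegral

theorem hasDerivAt_exp_integral {a : ℝ → ℝ} (ha : Continuous a) (t : ℝ) :
    HasDerivAt (fun u => Real.exp (∫ s in (0 : ℝ)..u, a s))
      (Real.exp (∫ s in (0 : ℝ)..t, a s) * a t) t :=
  (integral_hasDerivAt_right (ha.intervalIntegrable _ _)
    (ha.stronglyMeasurableAtFilter _ _) ha.continuousAt).exp

theorem eq_of_hasDerivAt_zero_of_nonneg {E : Type*} [NormedAddCommGroup E] [NormedSpace ℝ E]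
    {f : ℝ → E} (hf : ∀ t, 0 ≤ t → HasDerivAt f 0 t) {t : ℝ} (ht : 0 ≤ t) : f t = f 0 :=
  constant_of_has_deriv_right_zero (fun x hx => (hf x hx.1).continuousAt.continuousWithinAt)
    (fun x hx => (hf x hx.1).hasDerivWithinAt) t ⟨ht, le_rfl⟩

theorem exp_integral_smul_eq_of_hasDerivAt {E : Type*} [NormedAddCommGroup E] [NormedSpace ℝ E]
    {a : ℝ → ℝ} (ha : Continuous a) {y : ℝ → E}
    (hy : ∀ t, 0 ≤ t → HasDerivAt y (-a t • y t) t) {t : ℝ} (ht : 0 ≤ t) :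
    Real.exp (∫ s in (0 : ℝ)..t, a s) • y t = y 0 := by
  have hconst : ∀ t, 0 ≤ t →
      HasDerivAt (fun u => Real.exp (∫ s in (0 : ℝ)..u, a s) • y u) 0 t := fun t ht => by
    refine ((hasDerivAt_exp_integral ha t).smul (hy t ht)).congr_deriv ?_
    rw [smul_smul, ← add_smul, mul_neg, neg_add_cancel, zero_smul]
  simpa using eq_of_hasDerivAt_zero_of_nonneg hconst ht

theorem eq_smul_of_hasDerivAt_linear {E : Type*} [NormedAddCommGroup E] [NormedSpace ℝ E]
    {a : ℝ → ℝ} (ha : Continuous a) {y : ℝ → E} {w : ℝ → ℝ}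
    (hy : ∀ t, 0 ≤ t → HasDerivAt y (-a t • y t) t)
    (hw : ∀ t, 0 ≤ t → HasDerivAt w (-a t * w t) t) (hw0 : w 0 = 1) {t : ℝ} (ht : 0 ≤ t) :
    y t = w t • y 0 := by
  set e := Real.exp (∫ s in (0 : ℝ)..t, a s)
  have hwe : e * w t = 1 := by simpa [hw0] using exp_integral_smul_eq_of_hasDerivAt ha hw ht
  rw [← exp_integral_smul_eq_of_hasDerivAt ha hy ht, smul_smul, mul_comm, hwe, one_smul]

theorem ct_gradient_key_relation_general
    (γ θ : ℝ)
    (Δ θh w : ℝ → ℝ)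
    (hΔ : Continuous Δ)
    (hode : ∀ t, 0 ≤ t → HasDerivAt θh (γ * Δ t * (Δ t * θ - Δ t * θh t)) t)
    (hw : ∀ t, 0 ≤ t → HasDerivAt w (-γ * (Δ t) ^ 2 * w t) t)
    (hw0 : w 0 = 1) :
    ∀ t, 0 ≤ t → (1 - w t) * θ = θh t - w t * θh 0 := by
  intro t ht
  have hrate : Continuous fun s => γ * Δ s ^ 2 := by fun_prop
  have herr : ∀ s, 0 ≤ s → HasDerivAt (fun u => θh u - θ) (-(γ * Δ s ^ 2) • (θh s - θ)) s :=
    fun s hs => ((hode s hs).sub_const θ).congr_deriv (by simp only [smul_eq_mul]; ring)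
  have herr_eq := eq_smul_of_hasDerivAt_linear hrate herr (fun s hs => (hw s hs).congr_deriv (by ring))
    hw0 ht
  simp only [smul_eq_mul] at herr_eq
  linear_combination -herr_eq

theorem ct_gradient_key_relation
    (γ θ : ℝ) (hγ : 0 < γ)
    (Δ θh w : ℝ → ℝ)
    (hΔ : Continuous Δ)
    (hode : ∀ t, 0 ≤ t → HasDerivAt θh (γ * Δ t * (Δ t * θ - Δ t * θh t)) t)
    (hw : ∀ t, 0 ≤ t → HasDerivAt w (-γ * (Δ t) ^ 2 * w t) t)
    (hw0 : w 0 = 1) :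
    ∀ t, 0 ≤ t → (1 - w t) * θ = θh t - w t * θh 0 :=
  ct_gradient_key_relation_general γ θ Δ θh w hΔ hode hw hw0
end

section
/- For the continuous-time gradient estimator θ̂'(t) = γΔ(t)(Δ(t)θ - Δ(t)θ̂(t)) with constant θ, and w^D(t) = exp(-γ∫_{t-T_D}^t Δ(s)² ds) (with Δ ≡ 0 on negative times), the identity (1 - w^D(t))·θ = θ̂(t) - w^D(t)·θ̂(t - T_D) holds for all t ≥ T_D. -/
/-! With `k = γ Δ²` the estimator is the linear ODE `θ̂' = k (θ - θ̂)`, so the error `θ̂ - θ`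
decays by the integrating factor: `(θ̂ - θ) exp (∫ k)` has zero derivative, hence
`θ̂ t - θ = w^D(t) (θ̂ (t - T_D) - θ)`, which is the identity after rearranging. -/

open Real Set

theorem sub_eq_exp_neg_integral_mul_of_hasDerivAt {x k : ℝ → ℝ} {c a b : ℝ} (hab : a ≤ b)
    (hk : Continuous k) (hx : ∀ u ∈ Icc a b, HasDerivAt x (k u * (c - x u)) u) :
    x b - c = exp (-∫ u in a..b, k u) * (x a - c) := by
  set K : ℝ → ℝ := fun v => ∫ u in a..v, k u
  have hK : ∀ v, HasDerivAt K (k v) v := fun v => (hk.integral_hasStrictDerivAt a v).hasDerivAt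
  set g : ℝ → ℝ := fun v => (x v - c) * exp (K v)
  have hg : ∀ v ∈ Icc a b, HasDerivAt g 0 v := fun v hv => by
    have := ((hx v hv).sub_const c).mul (hK v).exp
    exact this.congr_deriv (by ring)
  have hg_const : g b = g a :=
    constant_of_has_deriv_right_zero (fun v hv => (hg v hv).continuousAt.continuousWithinAt)
      (fun v hv => (hg v (Ico_subset_Icc_self hv)).hasDerivWithinAt) b (right_mem_Icc.2 hab)
  have hKa : K a = 0 := intervalIntegral.integral_same
  simp only [g, hKa, exp_zero, mul_one] at hg_const
  rw [← hg_const, mul_comm, mul_assoc, ← exp_add, add_neg_cancel, exp_zero, mul_one]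

theorem ct_delayed_key_relation_general
    (γ TD θ : ℝ) (hTD : 0 < TD)
    (Δ θh : ℝ → ℝ) (hΔ : Continuous Δ)
    (hode : ∀ t, 0 ≤ t → HasDerivAt θh (γ * Δ t * (Δ t * θ - Δ t * θh t)) t)
    (wD : ℝ → ℝ)
    (hwD : ∀ t, wD t = Real.exp (-γ * ∫ s in (t - TD)..t, (Δ s) ^ 2)) :
    ∀ t, TD ≤ t → (1 - wD t) * θ = θh t - wD t * θh (t - TD) := by
  intro t ht
  have hode' : ∀ u ∈ Icc (t - TD) t, HasDerivAt θh (γ * Δ u ^ 2 * (θ - θh u)) u :=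
    fun u hu => (hode u (by linarith [hu.1])).congr_deriv (by ring)
  have hsol := sub_eq_exp_neg_integral_mul_of_hasDerivAt (k := fun u => γ * Δ u ^ 2)
    (by linarith) (by fun_prop) hode'
  rw [intervalIntegral.integral_const_mul, ← neg_mul, ← hwD] at hsol
  linear_combination -hsol

theorem ct_delayed_key_relation
    (γ TD θ : ℝ) (hγ : 0 < γ) (hTD : 0 < TD)
    (Δ θh : ℝ → ℝ) (hΔ : Continuous Δ)
    (hneg : ∀ s, s < 0 → Δ s = 0)
    (hode : ∀ t, 0 ≤ t → HasDerivAt θh (γ * Δ t * (Δ t * θ - Δ t * θh t)) t)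
    (wD : ℝ → ℝ)
    (hwD : ∀ t, wD t = Real.exp (-γ * ∫ s in (t - TD)..t, (Δ s) ^ 2)) :
    ∀ t, TD ≤ t → (1 - wD t) * θ = θh t - wD t * θh (t - TD) :=
  ct_delayed_key_relation_general γ TD θ hTD Δ θh hΔ hode wD hwD
end

section
/- For the discrete-time windowed estimator, if θ̂ satisfies θ̂(k+1) = θ̂(k) + (Δ(k)/(c+Δ(k)²))·(Δ(k)θ - Δ(k)θ̂(k)) with constant θ, then (1 - w^d(k))·θ = θ̂(k) - w^d(k)·θ̂(k - d - 1) for all k ≥ d + 1, where w^d(k) = ∏_{i=k-d-1}^{k-1} c/(c + Δ(i)²). -/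
theorem dt_windowed_key_relation
    (c θ : ℝ) (hc : 0 < c) (d : ℕ)
    (Δ θh : ℕ → ℝ)
    (hrec : ∀ k, θh (k + 1) =
      θh k + (Δ k / (c + (Δ k) ^ 2)) * (Δ k * θ - Δ k * θh k))
    (wd : ℕ → ℝ)
    (hwd : ∀ k, d + 1 ≤ k →
      wd k = ∏ i ∈ Finset.Ico (k - d - 1) k, c / (c + (Δ i) ^ 2)) :
    ∀ k, d + 1 ≤ k → (1 - wd k) * θ = θh k - wd k * θh (k - d - 1) := by
  have key : ∀ m k, m ≤ k →
      θh k - θ = (∏ i ∈ Finset.Ico m k, c / (c + (Δ i) ^ 2)) * (θh m - θ) := by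
    intro m
    refine Nat.le_induction ?_ ?_
    · simp
    · intro k hk ih
      have hpos : 0 < c + (Δ k) ^ 2 := by positivity
      have hstep : θh (k + 1) - θ = (c / (c + (Δ k) ^ 2)) * (θh k - θ) := by
        rw [hrec k]; field_simp; ring
      rw [Finset.prod_Ico_succ_top hk, hstep, ih]; ring
  intro k hk
  have hm : k - d - 1 ≤ k := by omega
  have h := key (k - d - 1) k hm
  rw [hwd k hk] at *
  linarith [h]
end
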